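/- arXiv:2509.12206 — 6 statements merged into one kernel-verified Lean document; each statement's English description precedes it below -/
import Mathlib

section
/- If the observations are degenerate — either y_i = 0 for all i, or y_i = c for all i for some c > 0 — then the folded-normal log-likelihood is unbounded above: sup over (μ,σ) ∈ ℝ × (0,∞) of ℓ_n(μ,σ) = +∞, i.e., for every M ∈ ℝ there exists (μ,σ) with ℓ_n(μ,σ) > M. -/
/-- Folded-normal log-likelihood of data `y : Fin n → ℝ` at `(μ, σ)`. -/
noncomputable def foldedLogLik (n : ℕ) (y : Fin n → ℝ) (μ σ : ℝ) : ℝ :=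
  ∑ i, (-Real.log σ - (y i ^ 2 + μ ^ 2) / (2 * σ ^ 2)
        + Real.log (2 * Real.cosh (y i * μ / σ ^ 2))
        - (1 / 2) * Real.log (2 * Real.pi))

/-- Degenerate samples (all zero, or all equal to some `c > 0`) make the folded-normal
log-likelihood unbounded above over `(μ, σ) ∈ ℝ × (0, ∞)`. -/
theorem foldedNormal_degenerate_unbounded (n : ℕ) (hn : 0 < n) (y : Fin n → ℝ)
    (hy : ∀ i, 0 ≤ y i)
    (hdeg : (∀ i, y i = 0) ∨ ∃ c : ℝ, 0 < c ∧ ∀ i, y i = c) :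
    ∀ M : ℝ, ∃ μ σ : ℝ, 0 < σ ∧ M < foldedLogLik n y μ σ := by
  intro M
  obtain ⟨μ, hμ⟩ : ∃ μ : ℝ, ∀ i, y i = μ := by
    rcases hdeg with h | ⟨c, _, h⟩
    · exact ⟨0, h⟩
    · exact ⟨c, h⟩
  set σ := Real.exp (-(M / n + (1/2) * Real.log (2 * Real.pi) + 1)) with hσdef
  have hσpos : (0:ℝ) < σ := Real.exp_pos _
  refine ⟨μ, σ, hσpos, ?_⟩
  have hterm : ∀ i : Fin n,
      M / n + 1 ≤ (-Real.log σ - (y i ^ 2 + μ ^ 2) / (2 * σ ^ 2)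
        + Real.log (2 * Real.cosh (y i * μ / σ ^ 2))
        - (1 / 2) * Real.log (2 * Real.pi)) := by
    intro i
    have hyi := hμ i
    have hlog : Real.log σ = -(M / n + (1/2) * Real.log (2 * Real.pi) + 1) :=
      Real.log_exp _
    have hcosh : μ * μ / σ ^ 2 ≤ Real.log (2 * Real.cosh (μ * μ / σ ^ 2)) := by
      have h1 : Real.exp (μ * μ / σ ^ 2) ≤ 2 * Real.cosh (μ * μ / σ ^ 2) := by
        rw [Real.cosh_eq]
        nlinarith [Real.exp_pos (-(μ * μ / σ ^ 2))]
      calc μ * μ / σ ^ 2 = Real.log (Real.exp (μ * μ / σ ^ 2)) := (Real.log_exp _).symm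
        _ ≤ _ := Real.log_le_log (Real.exp_pos _) h1
    rw [hyi]
    have heq : (μ ^ 2 + μ ^ 2) / (2 * σ ^ 2) = μ * μ / σ ^ 2 := by
      field_simp; ring
    have heq2 : μ * μ / σ ^ 2 = μ * μ / σ ^ 2 := rfl
    rw [hlog, heq]
    nlinarith [hcosh]
  have hnR : (0:ℝ) < (n:ℝ) := Nat.cast_pos.mpr hn
  have hsum : (n : ℝ) * (M / n + 1) ≤ foldedLogLik n y μ σ := by
    unfold foldedLogLik
    calc (n : ℝ) * (M / n + 1) = ∑ _i : Fin n, (M / n + 1) := by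
          rw [Finset.sum_const, Finset.card_univ, Fintype.card_fin, nsmul_eq_mul]
      _ ≤ _ := Finset.sum_le_sum fun i _ => hterm i
  have : M < (n : ℝ) * (M / n + 1) := by
    have : (n : ℝ) * (M / n) = M := by field_simp
    nlinarith
  linarith
end

section
/- Set C₀ = n·log 2 − (n/2)·log(2π). Then: (i) for every σ > 0 and every μ ∈ ℝ, ℓ_n(μ,σ) ≤ −n·log σ − (n/(2σ²))·((|μ| − ȳ)² + s²) + C₀; (ii) consequently, for every σ > 0, sup_{μ∈ℝ} ℓ_n(μ,σ) ≤ −n·log σ − n·s²/(2σ²) + C₀; (iii) if s² > 0, then sup_{μ∈ℝ} ℓ_n(μ,σ) → −∞ as σ → 0⁺ and as σ → ∞. -/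
open Filter

private lemma log_two_cosh_le (x : ℝ) :
    Real.log (2 * Real.cosh x) ≤ Real.log 2 + |x| := by
  have hc : (0:ℝ) < Real.cosh x := Real.cosh_pos x
  rw [Real.log_mul (by norm_num) (ne_of_gt hc)]
  have h1 : Real.cosh x ≤ Real.exp |x| := by
    rw [← Real.cosh_abs, Real.cosh_eq]
    have h2 : Real.exp (-|x|) ≤ Real.exp |x| :=
      Real.exp_le_exp.mpr (neg_le_self (abs_nonneg x))
    linarith
  have := (Real.log_le_iff_le_exp hc).mpr h1
  linarith

private lemma tendsto_aux0 (a b c : ℝ) (hb : 0 < b) :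
    Tendsto (fun σ : ℝ => (a - b * σ⁻¹) * σ⁻¹ + c) (nhdsWithin 0 (Set.Ioi 0)) atBot := by
  have h1 : Tendsto (fun σ : ℝ => σ⁻¹) (nhdsWithin (0:ℝ) (Set.Ioi 0)) atTop :=
    tendsto_inv_nhdsGT_zero
  have h2 : Tendsto (fun σ : ℝ => b * σ⁻¹) (nhdsWithin (0:ℝ) (Set.Ioi 0)) atTop :=
    h1.const_mul_atTop hb
  have h3 : Tendsto (fun σ : ℝ => a - b * σ⁻¹) (nhdsWithin (0:ℝ) (Set.Ioi 0)) atBot := by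
    simp only [sub_eq_add_neg]
    exact tendsto_atBot_add_const_left _ a (tendsto_neg_atTop_atBot.comp h2)
  exact tendsto_atBot_add_const_right _ c (h3.atBot_mul_atTop₀ h1)

private lemma tendsto_aux1 (a c : ℝ) (ha : 0 < a) :
    Tendsto (fun σ : ℝ => -(a * Real.log σ) + c) atTop atBot :=
  tendsto_atBot_add_const_right _ c
    (tendsto_neg_atTop_atBot.comp (Real.tendsto_log_atTop.const_mul_atTop ha))

/-- Boundary coercivity of the profiled folded-normal likelihood, with the
explicit constant `C₀ = n log 2 - (n/2) log(2π)`: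
(i) the pointwise bound in `μ`; (ii) the resulting bound for `sup_μ`;
(iii) if `s² > 0` then the profile tends to `-∞` as `σ → 0⁺` and as `σ → ∞`. -/
theorem foldedNormal_boundary_coercivity (n : ℕ) (hn : 0 < n) (y : Fin n → ℝ)
    (hy : ∀ i, 0 ≤ y i) (ybar s2 C0 : ℝ)
    (hybar : ybar = (∑ i, y i) / n)
    (hs2 : s2 = (∑ i, (y i - ybar) ^ 2) / n)
    (hC0 : C0 = n * Real.log 2 - ((n : ℝ) / 2) * Real.log (2 * Real.pi)) :
    (∀ σ : ℝ, 0 < σ → ∀ μ : ℝ,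
      foldedLogLik n y μ σ
        ≤ -(n : ℝ) * Real.log σ - ((n : ℝ) / (2 * σ ^ 2)) * ((|μ| - ybar) ^ 2 + s2) + C0) ∧
    (∀ σ : ℝ, 0 < σ →
      (⨆ μ : ℝ, foldedLogLik n y μ σ)
        ≤ -(n : ℝ) * Real.log σ - (n : ℝ) * s2 / (2 * σ ^ 2) + C0) ∧
    (0 < s2 →
      Tendsto (fun σ : ℝ => ⨆ μ : ℝ, foldedLogLik n y μ σ) (nhdsWithin 0 (Set.Ioi 0)) atBot ∧
      Tendsto (fun σ : ℝ => ⨆ μ : ℝ, foldedLogLik n y μ σ) atTop atBot) := by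
  have hnR : (0:ℝ) < n := Nat.cast_pos.mpr hn
  -- sum expansions
  have hsum1 : ∑ i, y i = (n:ℝ) * ybar := by
    rw [hybar]; field_simp
  have expand : ∀ m : ℝ, ∑ i, (y i - m) ^ 2
      = (∑ i, (y i) ^ 2) - 2 * m * (∑ i, y i) + n * m ^ 2 := by
    intro m
    rw [Finset.sum_congr rfl
      (fun i _ => (by ring : (y i - m) ^ 2 = y i ^ 2 - (2 * m) * y i + m ^ 2))]
    rw [Finset.sum_add_distrib, Finset.sum_sub_distrib, ← Finset.mul_sum,
      Finset.sum_const, Finset.card_univ, Fintype.card_fin, nsmul_eq_mul]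
  have hns2 : ∑ i, (y i - ybar) ^ 2 = (n:ℝ) * s2 := by
    rw [hs2]; field_simp
  have hkey : ∀ m : ℝ, ∑ i, (y i - m) ^ 2 = (n:ℝ) * ((m - ybar) ^ 2 + s2) := by
    intro m
    linear_combination expand m - expand ybar + hns2 + (2 * ybar - 2 * m) * hsum1
  -- part (i)
  have part1 : ∀ σ : ℝ, 0 < σ → ∀ μ : ℝ,
      foldedLogLik n y μ σ
        ≤ -(n : ℝ) * Real.log σ - ((n : ℝ) / (2 * σ ^ 2)) * ((|μ| - ybar) ^ 2 + s2) + C0 := by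
    intro σ hσ μ
    have hσ2 : (0:ℝ) < σ ^ 2 := by positivity
    have per : ∀ i ∈ Finset.univ, (-Real.log σ - (y i ^ 2 + μ ^ 2) / (2 * σ ^ 2)
        + Real.log (2 * Real.cosh (y i * μ / σ ^ 2))
        - (1 / 2) * Real.log (2 * Real.pi))
        ≤ -Real.log σ - (y i - |μ|) ^ 2 / (2 * σ ^ 2) + Real.log 2
          - (1 / 2) * Real.log (2 * Real.pi) := by
      intro i _
      have h1 := log_two_cosh_le (y i * μ / σ ^ 2)
      have habs : |y i * μ / σ ^ 2| = y i * |μ| / σ ^ 2 := by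
        rw [abs_div, abs_mul, abs_of_nonneg (hy i), abs_of_nonneg (le_of_lt hσ2)]
      rw [habs] at h1
      have hμ : μ ^ 2 = |μ| ^ 2 := (sq_abs μ).symm
      have eq1 : -((y i ^ 2 + μ ^ 2) / (2 * σ ^ 2)) + y i * |μ| / σ ^ 2
          = -((y i - |μ|) ^ 2 / (2 * σ ^ 2)) := by
        rw [hμ]
        generalize |μ| = m
        field_simp
        ring
      linarith
    have hsumle := Finset.sum_le_sum per
    have heq : ∑ _i : Fin n, (-Real.log σ + Real.log 2 - (1 / 2) * Real.log (2 * Real.pi))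
          - (∑ i, (y i - |μ|) ^ 2) / (2 * σ ^ 2)
        = -(n : ℝ) * Real.log σ - ((n : ℝ) / (2 * σ ^ 2)) * ((|μ| - ybar) ^ 2 + s2) + C0 := by
      rw [Finset.sum_const, Finset.card_univ, Fintype.card_fin, nsmul_eq_mul, hkey |μ|, hC0]
      field_simp
      ring
    calc foldedLogLik n y μ σ
        ≤ ∑ i, (-Real.log σ - (y i - |μ|) ^ 2 / (2 * σ ^ 2) + Real.log 2
            - (1 / 2) * Real.log (2 * Real.pi)) := hsumle
      _ = ∑ _i : Fin n, (-Real.log σ + Real.log 2 - (1 / 2) * Real.log (2 * Real.pi))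
            - (∑ i, (y i - |μ|) ^ 2) / (2 * σ ^ 2) := by
          rw [Finset.sum_div, ← Finset.sum_sub_distrib]
          exact Finset.sum_congr rfl fun i _ => by ring
      _ = _ := heq
  -- part (ii)
  have part2 : ∀ σ : ℝ, 0 < σ →
      (⨆ μ : ℝ, foldedLogLik n y μ σ)
        ≤ -(n : ℝ) * Real.log σ - (n : ℝ) * s2 / (2 * σ ^ 2) + C0 := by
    intro σ hσ
    refine ciSup_le fun μ => ?_
    have hb := part1 σ hσ μ
    have hd : (0:ℝ) ≤ (n:ℝ) / (2 * σ ^ 2) := by positivity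
    have e : -(n : ℝ) * Real.log σ - ((n : ℝ) / (2 * σ ^ 2)) * ((|μ| - ybar) ^ 2 + s2) + C0
        = (-(n : ℝ) * Real.log σ - (n : ℝ) * s2 / (2 * σ ^ 2) + C0)
          - ((n : ℝ) / (2 * σ ^ 2)) * (|μ| - ybar) ^ 2 := by ring
    rw [e] at hb
    have hnn := mul_nonneg hd (sq_nonneg (|μ| - ybar))
    linarith
  refine ⟨part1, part2, fun hs2pos => ?_⟩
  constructor
  · -- σ → 0⁺
    refine tendsto_atBot_mono' _ ?_
      (tendsto_aux0 (n:ℝ) ((n:ℝ) * s2 / 2) (C0 - n) (by positivity))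
    filter_upwards [self_mem_nhdsWithin] with σ hσ
    have hσ : (0:ℝ) < σ := hσ
    have h2 := part2 σ hσ
    have hlog : -Real.log σ ≤ 1 / σ - 1 := by
      have := Real.log_le_sub_one_of_pos (x := 1 / σ) (by positivity)
      rw [Real.log_div one_ne_zero (ne_of_gt hσ), Real.log_one] at this
      linarith
    have hineq : -(n : ℝ) * Real.log σ - (n : ℝ) * s2 / (2 * σ ^ 2) + C0
        ≤ ((n:ℝ) - ((n:ℝ) * s2 / 2) * σ⁻¹) * σ⁻¹ + (C0 - n) := by
      have e : ((n:ℝ) - ((n:ℝ) * s2 / 2) * σ⁻¹) * σ⁻¹ + (C0 - n)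
          = (n:ℝ) * (1 / σ - 1) - (n : ℝ) * s2 / (2 * σ ^ 2) + C0 := by
        field_simp
        ring
      rw [e]
      have := mul_le_mul_of_nonneg_left hlog (le_of_lt hnR)
      linarith
    exact le_trans h2 hineq
  · -- σ → ∞
    refine tendsto_atBot_mono' _ ?_ (tendsto_aux1 (n:ℝ) C0 hnR)
    filter_upwards [eventually_gt_atTop (0:ℝ)] with σ hσ
    have h2 := part2 σ hσ
    have : (0:ℝ) ≤ (n:ℝ) * s2 / (2 * σ ^ 2) := by positivity
    linarith
end

section
/- Fix σ > 0. (a) If n·σ² ≥ S_y, then μ = 0 is the unique maximizer of μ ↦ ℓ_n(μ,σ) over [0,∞): ℓ_n(μ,σ) < ℓ_n(0,σ) for every μ > 0. (b) If n·σ² < S_y, then the score function μ ↦ Σ_{i=1}^n y_i·tanh(y_i μ/σ²) − n·μ has exactly one zero μ* on (0,∞), and this μ* is the unique maximizer of μ ↦ ℓ_n(μ,σ) over [0,∞). -/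
open Real Set Filter Topology

lemma tanh_hasDerivAt' (x : ℝ) : HasDerivAt Real.tanh (1 / Real.cosh x ^ 2) x := by
  have h : HasDerivAt (fun x => Real.sinh x / Real.cosh x)
      ((Real.cosh x * Real.cosh x - Real.sinh x * Real.sinh x) / Real.cosh x ^ 2) x :=
    (Real.hasDerivAt_sinh x).div (Real.hasDerivAt_cosh x) (Real.cosh_pos x).ne'
  have e : Real.tanh = fun x => Real.sinh x / Real.cosh x :=
    funext Real.tanh_eq_sinh_div_cosh
  rw [e]
  convert h using 2
  rw [← Real.cosh_sq_sub_sinh_sq x]; ring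

lemma my_tanh_le_one (x : ℝ) : Real.tanh x ≤ 1 := by
  rw [Real.tanh_eq_sinh_div_cosh, div_le_one (Real.cosh_pos x)]
  nlinarith [Real.cosh_sub_sinh x, Real.exp_pos (-x)]

/-- the score function -/
noncomputable def fnScore (n : ℕ) (y : Fin n → ℝ) (σ : ℝ) (μ : ℝ) : ℝ :=
  (∑ i, y i * Real.tanh (y i * μ / σ ^ 2)) - n * μ

/-- derivative of the score -/
noncomputable def fnScoreD (n : ℕ) (y : Fin n → ℝ) (σ : ℝ) (μ : ℝ) : ℝ :=
  (∑ i, y i * (1 / Real.cosh (y i * μ / σ ^ 2) ^ 2 * (y i / σ ^ 2))) - n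

lemma arg_hasDerivAt (c σ μ : ℝ) :
    HasDerivAt (fun μ : ℝ => c * μ / σ ^ 2) (c / σ ^ 2) μ := by
  simpa using ((hasDerivAt_id μ).const_mul c).div_const (σ ^ 2)

lemma fnScore_hasDerivAt (n : ℕ) (y : Fin n → ℝ) (σ : ℝ) (μ : ℝ) :
    HasDerivAt (fnScore n y σ) (fnScoreD n y σ μ) μ := by
  have hterm : ∀ i : Fin n, HasDerivAt (fun μ => y i * Real.tanh (y i * μ / σ ^ 2))
      (y i * (1 / Real.cosh (y i * μ / σ ^ 2) ^ 2 * (y i / σ ^ 2))) μ := fun i =>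
    (((tanh_hasDerivAt' _).comp μ (arg_hasDerivAt (y i) σ μ))).const_mul (y i)
  have hsum := HasDerivAt.fun_sum (u := Finset.univ) (fun i _ => hterm i)
  have := hsum.sub ((hasDerivAt_id μ).const_mul (n : ℝ))
  exact this.congr_deriv (by simp [fnScoreD])

lemma fnScore_zero (n : ℕ) (y : Fin n → ℝ) (σ : ℝ) : fnScore n y σ 0 = 0 := by
  simp [fnScore]

lemma fnScoreD_zero (n : ℕ) (y : Fin n → ℝ) (σ : ℝ) :
    fnScoreD n y σ 0 = (∑ i, y i ^ 2) / σ ^ 2 - n := by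
  simp only [fnScoreD, mul_zero, zero_div, Real.cosh_zero, one_pow, div_one, one_mul]
  rw [Finset.sum_div]
  congr 1
  exact Finset.sum_congr rfl fun i _ => by ring

lemma foldedLogLik_hasDerivAt (n : ℕ) (y : Fin n → ℝ) (σ : ℝ) (hσ : 0 < σ) (μ : ℝ) :
    HasDerivAt (fun μ => foldedLogLik n y μ σ) (fnScore n y σ μ / σ ^ 2) μ := by
  have hterm : ∀ i : Fin n, HasDerivAt
      (fun μ => -Real.log σ - (y i ^ 2 + μ ^ 2) / (2 * σ ^ 2)
        + Real.log (2 * Real.cosh (y i * μ / σ ^ 2))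
        - (1 / 2) * Real.log (2 * Real.pi))
      (y i * Real.tanh (y i * μ / σ ^ 2) / σ ^ 2 - μ / σ ^ 2) μ := by
    intro i
    have h1 : HasDerivAt (fun μ : ℝ => (y i ^ 2 + μ ^ 2) / (2 * σ ^ 2))
        (2 * μ / (2 * σ ^ 2)) μ := by
      simpa using ((hasDerivAt_pow 2 μ).const_add (y i ^ 2)).div_const (2 * σ ^ 2)
    have h2 : HasDerivAt (fun μ => 2 * Real.cosh (y i * μ / σ ^ 2))
        (2 * (Real.sinh (y i * μ / σ ^ 2) * (y i / σ ^ 2))) μ :=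
      ((Real.hasDerivAt_cosh _).comp μ (arg_hasDerivAt (y i) σ μ)).const_mul 2
    have hpos : (2 : ℝ) * Real.cosh (y i * μ / σ ^ 2) ≠ 0 := by positivity
    have h3 := (Real.hasDerivAt_log hpos).comp μ h2
    have h := (((hasDerivAt_const μ (-Real.log σ)).sub h1).add h3).sub
      (hasDerivAt_const μ ((1 / 2) * Real.log (2 * Real.pi)))
    refine h.congr_deriv (Eq.symm ?_)
    rw [Real.tanh_eq_sinh_div_cosh]
    have hc := (Real.cosh_pos (y i * μ / σ ^ 2)).ne'
    field_simp
    ring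
  have hsum := HasDerivAt.fun_sum (u := Finset.univ) (fun i _ => hterm i)
  have heq : (∑ i : Fin n, (y i * Real.tanh (y i * μ / σ ^ 2) / σ ^ 2 - μ / σ ^ 2))
      = fnScore n y σ μ / σ ^ 2 := by
    rw [Finset.sum_sub_distrib, Finset.sum_const, Finset.card_univ, Fintype.card_fin,
      fnScore, sub_div, Finset.sum_div, nsmul_eq_mul]
    congr 1
    rw [mul_div_assoc]
  rw [show (fun μ => foldedLogLik n y μ σ) = fun μ => ∑ i : Fin n,
      (-Real.log σ - (y i ^ 2 + μ ^ 2) / (2 * σ ^ 2)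
        + Real.log (2 * Real.cosh (y i * μ / σ ^ 2))
        - (1 / 2) * Real.log (2 * Real.pi)) from rfl]
  rw [← heq]
  exact hsum

lemma term_strict (σ : ℝ) (hσ : 0 < σ) {c a b : ℝ} (hc : 0 < c) (ha : 0 ≤ a) (hab : a < b) :
    c * (1 / Real.cosh (c * b / σ ^ 2) ^ 2 * (c / σ ^ 2))
      < c * (1 / Real.cosh (c * a / σ ^ 2) ^ 2 * (c / σ ^ 2)) := by
  have hσ2 : (0 : ℝ) < σ ^ 2 := by positivity
  have hb : (0 : ℝ) ≤ b := ha.trans hab.le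
  have h1 : Real.cosh (c * a / σ ^ 2) < Real.cosh (c * b / σ ^ 2) := by
    rw [Real.cosh_lt_cosh, abs_of_nonneg (div_nonneg (mul_nonneg hc.le ha) hσ2.le),
      abs_of_nonneg (div_nonneg (mul_nonneg hc.le hb) hσ2.le)]
    gcongr
  have h2 : 1 / Real.cosh (c * b / σ ^ 2) ^ 2 < 1 / Real.cosh (c * a / σ ^ 2) ^ 2 := by
    apply one_div_lt_one_div_of_lt (by positivity)
    exact pow_lt_pow_left₀ h1 (Real.cosh_pos _).le two_ne_zero
  exact mul_lt_mul_of_pos_left (mul_lt_mul_of_pos_right h2 (div_pos hc hσ2)) hc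

lemma fnScoreD_strictAnti (n : ℕ) (y : Fin n → ℝ) (hy : ∀ i, 0 ≤ y i) (σ : ℝ)
    (hσ : 0 < σ) (i₀ : Fin n) (hi₀ : 0 < y i₀) :
    StrictAntiOn (fnScoreD n y σ) (Set.Ici 0) := by
  intro a ha b hb hab
  simp only [fnScoreD]
  apply sub_lt_sub_right
  apply Finset.sum_lt_sum
  · intro i _
    rcases eq_or_lt_of_le (hy i) with h0 | h0
    · simp [← h0]
    · exact (term_strict σ hσ h0 ha hab).le
  · exact ⟨i₀, Finset.mem_univ i₀, term_strict σ hσ hi₀ ha hab⟩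

/-- For fixed `σ > 0`:
(a) if `n σ² ≥ S_y`, then `μ = 0` is the unique maximizer of `μ ↦ ℓ_n(μ,σ)` on `[0,∞)`;
(b) if `n σ² < S_y`, the score `μ ↦ ∑ yᵢ tanh(yᵢ μ/σ²) − n μ` has exactly one zero `μ*`
on `(0,∞)`, and `μ*` is the unique maximizer of `μ ↦ ℓ_n(μ,σ)` on `[0,∞)`. -/
theorem foldedNormal_mu_maximizer (n : ℕ) (hn : 0 < n) (y : Fin n → ℝ)
    (hy : ∀ i, 0 ≤ y i) (σ : ℝ) (hσ : 0 < σ) :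
    ((∑ i, y i ^ 2) ≤ (n : ℝ) * σ ^ 2 →
      ∀ μ : ℝ, 0 < μ → foldedLogLik n y μ σ < foldedLogLik n y 0 σ) ∧
    ((n : ℝ) * σ ^ 2 < ∑ i, y i ^ 2 →
      ∃ μs : ℝ, 0 < μs ∧
        (∀ μ : ℝ, 0 < μ →
          ((∑ i, y i * Real.tanh (y i * μ / σ ^ 2)) - (n : ℝ) * μ = 0 ↔ μ = μs)) ∧
        (∀ μ : ℝ, 0 ≤ μ → μ ≠ μs → foldedLogLik n y μ σ < foldedLogLik n y μs σ)) := by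
  have hσ2 : (0 : ℝ) < σ ^ 2 := by positivity
  have hn' : (0 : ℝ) < n := by exact_mod_cast hn
  have hL : ∀ μ, HasDerivAt (fun μ => foldedLogLik n y μ σ) (fnScore n y σ μ / σ ^ 2) μ :=
    foldedLogLik_hasDerivAt n y σ hσ
  have hS : ∀ μ, HasDerivAt (fnScore n y σ) (fnScoreD n y σ μ) μ :=
    fnScore_hasDerivAt n y σ
  have hScont : Continuous (fnScore n y σ) :=
    continuous_iff_continuousAt.2 fun μ => (hS μ).continuousAt
  have hLcont : Continuous (fun μ => foldedLogLik n y μ σ) :=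
    continuous_iff_continuousAt.2 fun μ => (hL μ).continuousAt
  have hSd : deriv (fnScore n y σ) = fnScoreD n y σ := funext fun μ => (hS μ).deriv
  have hLd : deriv (fun μ => foldedLogLik n y μ σ) = fun μ => fnScore n y σ μ / σ ^ 2 :=
    funext fun μ => (hL μ).deriv
  constructor
  · -- part (a)
    intro hle μ hμ
    have hneg : ∀ μ, 0 < μ → fnScore n y σ μ < 0 := by
      by_cases hex : ∃ i, 0 < y i
      · obtain ⟨i₀, hi₀⟩ := hex
        have hanti := fnScoreD_strictAnti n y hy σ hσ i₀ hi₀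
        have hD0 : fnScoreD n y σ 0 ≤ 0 := by
          rw [fnScoreD_zero]
          exact sub_nonpos.2 ((div_le_iff₀ hσ2).2 hle)
        have hSanti : StrictAntiOn (fnScore n y σ) (Set.Ici 0) := by
          apply strictAntiOn_of_deriv_neg (convex_Ici 0) hScont.continuousOn
          intro x hx
          rw [interior_Ici] at hx
          rw [hSd]
          exact lt_of_lt_of_le (hanti (Set.mem_Ici.2 le_rfl) (Set.mem_Ici.2 hx.le) hx) hD0
        intro μ hμ
        have := hSanti (Set.mem_Ici.2 le_rfl) (Set.mem_Ici.2 hμ.le) hμ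
        rwa [fnScore_zero] at this
      · push_neg at hex
        intro μ hμ
        have hz : ∀ i, y i = 0 := fun i => le_antisymm (hex i) (hy i)
        simp only [fnScore, hz, zero_mul, Finset.sum_const, smul_zero, zero_sub, neg_neg,
          neg_lt_zero]
        exact mul_pos hn' hμ
    have hLanti : StrictAntiOn (fun μ => foldedLogLik n y μ σ) (Set.Ici 0) := by
      apply strictAntiOn_of_deriv_neg (convex_Ici 0) hLcont.continuousOn
      intro x hx
      rw [interior_Ici] at hx
      simp only [hLd]
      exact div_neg_of_neg_of_pos (hneg x hx) hσ2
    exact hLanti (Set.mem_Ici.2 le_rfl) (Set.mem_Ici.2 hμ.le) hμ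
  · -- part (b)
    intro hlt
    have hSy : 0 < ∑ i, y i ^ 2 := lt_of_le_of_lt (by positivity) hlt
    obtain ⟨i₀, hi₀⟩ : ∃ i, 0 < y i := by
      by_contra h
      push_neg at h
      have : ∀ i, y i = 0 := fun i => le_antisymm (h i) (hy i)
      simp [this] at hSy
    have hanti := fnScoreD_strictAnti n y hy σ hσ i₀ hi₀
    have hD0 : 0 < fnScoreD n y σ 0 := by
      rw [fnScoreD_zero]
      exact sub_pos.2 ((lt_div_iff₀ hσ2).2 hlt)
    -- find δ > 0 with positive score
    obtain ⟨δ, hδpos, hδscore⟩ : ∃ δ > (0:ℝ), 0 < fnScore n y σ δ := by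
      have hslope := hS 0
      rw [hasDerivAt_iff_tendsto_slope] at hslope
      have hev : ∀ᶠ x in 𝓝[≠] (0:ℝ), 0 < slope (fnScore n y σ) 0 x :=
        hslope.eventually (eventually_gt_nhds hD0)
      have hle : 𝓝[>] (0:ℝ) ≤ 𝓝[≠] 0 :=
        nhdsWithin_mono 0 (fun x hx => ne_of_gt hx)
      obtain ⟨x, hx1, hx2⟩ := ((hev.filter_mono hle).and self_mem_nhdsWithin).exists
      refine ⟨x, hx2, ?_⟩
      rw [slope_def_field, fnScore_zero, sub_zero, sub_zero] at hx1
      have := mul_pos hx1 (show (0:ℝ) < x from hx2)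
      rwa [div_mul_cancel₀ _ (ne_of_gt (show (0:ℝ) < x from hx2))] at this
    have hsumy : (0:ℝ) ≤ ∑ i, y i := Finset.sum_nonneg fun i _ => hy i
    obtain ⟨M, hMδ, hMn⟩ : ∃ M, δ < M ∧ (∑ i, y i) < (n : ℝ) * M := by
      refine ⟨(∑ i, y i) / n + 1 + δ, ?_, ?_⟩
      · have : (0:ℝ) ≤ (∑ i, y i) / n := div_nonneg hsumy hn'.le
        linarith
      · rw [mul_add, mul_add, mul_div_cancel₀ _ hn'.ne']
        nlinarith [mul_pos hn' hδpos]
    have hMneg : fnScore n y σ M < 0 := by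
      have hb : ∀ i, y i * Real.tanh (y i * M / σ ^ 2) ≤ y i := fun i => by
        calc y i * Real.tanh (y i * M / σ ^ 2) ≤ y i * 1 :=
              mul_le_mul_of_nonneg_left (my_tanh_le_one _) (hy i)
          _ = y i := mul_one _
      have hsum : (∑ i, y i * Real.tanh (y i * M / σ ^ 2)) ≤ ∑ i, y i :=
        Finset.sum_le_sum fun i _ => hb i
      simp only [fnScore]
      linarith
    obtain ⟨μs, ⟨hμs1, _⟩, hμs0⟩ : ∃ μs ∈ Icc δ M, fnScore n y σ μs = 0 := by
      obtain ⟨μs, hmem, heq⟩ := intermediate_value_Icc' hMδ.le hScont.continuousOn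
        ⟨hMneg.le, hδscore.le⟩
      exact ⟨μs, hmem, heq⟩
    have hμspos : 0 < μs := lt_of_lt_of_le hδpos hμs1
    have hconc : StrictConcaveOn ℝ (Set.Ici 0) (fnScore n y σ) := by
      apply StrictAntiOn.strictConcaveOn_of_deriv (convex_Ici 0) hScont.continuousOn
      rw [interior_Ici, hSd]
      exact fun a ha b hb hab => hanti (Set.mem_Ici.2 (le_of_lt ha)) (Set.mem_Ici.2 (le_of_lt hb)) hab
    have hpos : ∀ μ, 0 < μ → μ < μs → 0 < fnScore n y σ μ := by
      intro μ hμ hlt2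
      have hbpos : 0 < μ / μs := div_pos hμ hμspos
      have hapos : 0 < 1 - μ / μs := by
        rw [sub_pos, div_lt_one hμspos]; exact hlt2
      have := hconc.2 (Set.mem_Ici.2 le_rfl) (Set.mem_Ici.2 hμspos.le)
        (ne_of_lt hμspos) hapos hbpos (by ring)
      rw [fnScore_zero, hμs0] at this
      simp only [smul_eq_mul, mul_zero, add_zero, smul_zero, zero_add] at this
      rwa [div_mul_cancel₀ _ hμspos.ne'] at this
    have hneg2 : ∀ μ, μs < μ → fnScore n y σ μ < 0 := by
      intro μ hlt2
      have hμpos : 0 < μ := hμspos.trans hlt2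
      have hbpos : 0 < μs / μ := div_pos hμspos hμpos
      have hapos : 0 < 1 - μs / μ := by
        rw [sub_pos, div_lt_one hμpos]; exact hlt2
      have := hconc.2 (Set.mem_Ici.2 le_rfl) (Set.mem_Ici.2 hμpos.le)
        (ne_of_lt hμpos) hapos hbpos (by ring)
      rw [fnScore_zero] at this
      simp only [smul_eq_mul, mul_zero, zero_add] at this
      rw [div_mul_cancel₀ _ hμpos.ne', hμs0] at this
      nlinarith
    refine ⟨μs, hμspos, ?_, ?_⟩
    · intro μ hμ
      constructor
      · intro h0
        have h0' : fnScore n y σ μ = 0 := h0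
        by_contra hne
        rcases lt_or_gt_of_ne hne with h | h
        · exact absurd h0' (ne_of_gt (hpos μ hμ h))
        · exact absurd h0' (ne_of_lt (hneg2 μ h))
      · intro h; subst h; exact hμs0
    · intro μ hμ0 hne
      have hmono : StrictMonoOn (fun μ => foldedLogLik n y μ σ) (Set.Icc 0 μs) := by
        apply strictMonoOn_of_deriv_pos (convex_Icc 0 μs) hLcont.continuousOn
        intro x hx
        rw [interior_Icc] at hx
        simp only [hLd]
        exact div_pos (hpos x hx.1 hx.2) hσ2
      have hanti2 : StrictAntiOn (fun μ => foldedLogLik n y μ σ) (Set.Ici μs) := by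
        apply strictAntiOn_of_deriv_neg (convex_Ici μs) hLcont.continuousOn
        intro x hx
        rw [interior_Ici] at hx
        simp only [hLd]
        exact div_neg_of_neg_of_pos (hneg2 x hx) hσ2
      rcases lt_or_gt_of_ne hne with h | h
      · exact hmono ⟨hμ0, h.le⟩ ⟨hμspos.le, le_rfl⟩ h
      · exact hanti2 (Set.mem_Ici.2 le_rfl) (Set.mem_Ici.2 h.le) h
end

section
/- Let U = {σ > 0 : n·σ² < S_y} and, for σ ∈ U, let μ̂(σ) denote the unique positive zero of μ ↦ Σ_{i=1}^n y_i·tanh(y_i μ/σ²) − n·μ. Then μ̂ is differentiable on U, and at every σ ∈ U, writing A = Σ_{i=1}^n y_i²·sech²(y_i μ̂(σ)/σ²), one has n − A/σ² > 0 and μ̂'(σ) = − ( (2·μ̂(σ)/σ)·(A/σ²) ) / ( n − A/σ² ), which is strictly negative. -/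
open Finset Filter Topology

set_option maxHeartbeats 1000000

private lemma tanh_hasStrictDerivAt (t : ℝ) :
    HasStrictDerivAt Real.tanh ((1 / Real.cosh t) ^ 2) t := by
  have h := (Real.hasStrictDerivAt_sinh t).div (Real.hasStrictDerivAt_cosh t)
    (Real.cosh_pos t).ne'
  have hfun : Real.tanh = fun x => Real.sinh x / Real.cosh x :=
    funext fun x => Real.tanh_eq_sinh_div_cosh x
  rw [hfun]
  refine h.congr_deriv ?_
  have h1 := Real.cosh_sq_sub_sinh_sq t
  have hc := Real.cosh_pos t
  field_simp
  nlinarith [h1, hc]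

private lemma key_ineq {t : ℝ} (ht : 0 < t) :
    t * (1 / Real.cosh t) ^ 2 < Real.tanh t := by
  have hc := Real.cosh_pos t
  have h1 : 2 * t < Real.sinh (2 * t) := Real.self_lt_sinh_iff.2 (by linarith)
  rw [Real.sinh_two_mul] at h1
  have h2 : t < Real.sinh t * Real.cosh t := by nlinarith
  rw [Real.tanh_eq_sinh_div_cosh,
    show t * (1 / Real.cosh t) ^ 2 = t / Real.cosh t ^ 2 by ring,
    div_lt_div_iff₀ (by positivity) hc]
  nlinarith

/-- Implicit differentiation of the profile path `σ ↦ μ̂(σ)`: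
on `U = {σ > 0 : n σ² < S_y}`, where `μ̂(σ)` is the unique positive zero of the score
`μ ↦ ∑ yᵢ tanh(yᵢ μ/σ²) − n μ`, the function `μ̂` is differentiable, and with
`A = ∑ yᵢ² sech²(yᵢ μ̂(σ)/σ²)` one has `n − A/σ² > 0` and
`μ̂'(σ) = −((2 μ̂(σ)/σ)(A/σ²))/(n − A/σ²) < 0`. -/
theorem foldedNormal_muhat_deriv (n : ℕ) (hn : 0 < n) (y : Fin n → ℝ)
    (hy : ∀ i, 0 ≤ y i) (μhat : ℝ → ℝ)
    (hμhat : ∀ σ : ℝ, 0 < σ → (n : ℝ) * σ ^ 2 < ∑ i, y i ^ 2 →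
      0 < μhat σ ∧
      (∑ i, y i * Real.tanh (y i * μhat σ / σ ^ 2)) - (n : ℝ) * μhat σ = 0 ∧
      ∀ μ : ℝ, 0 < μ →
        (∑ i, y i * Real.tanh (y i * μ / σ ^ 2)) - (n : ℝ) * μ = 0 → μ = μhat σ) :
    ∀ σ : ℝ, 0 < σ → (n : ℝ) * σ ^ 2 < ∑ i, y i ^ 2 →
      0 < (n : ℝ) - (∑ i, y i ^ 2 * (1 / Real.cosh (y i * μhat σ / σ ^ 2)) ^ 2) / σ ^ 2 ∧
      HasDerivAt μhat
        (-((2 * μhat σ / σ) *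
            ((∑ i, y i ^ 2 * (1 / Real.cosh (y i * μhat σ / σ ^ 2)) ^ 2) / σ ^ 2)) /
          ((n : ℝ) - (∑ i, y i ^ 2 * (1 / Real.cosh (y i * μhat σ / σ ^ 2)) ^ 2) / σ ^ 2)) σ ∧
      -((2 * μhat σ / σ) *
            ((∑ i, y i ^ 2 * (1 / Real.cosh (y i * μhat σ / σ ^ 2)) ^ 2) / σ ^ 2)) /
          ((n : ℝ) - (∑ i, y i ^ 2 * (1 / Real.cosh (y i * μhat σ / σ ^ 2)) ^ 2) / σ ^ 2) < 0 := by
  intro σ hσ hS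
  obtain ⟨hμ0, hzero, huniq⟩ := hμhat σ hσ hS
  set μ0 := μhat σ with hμ0def
  set A : ℝ := ∑ i, y i ^ 2 * (1 / Real.cosh (y i * μ0 / σ ^ 2)) ^ 2 with hA
  have hσ2 : (σ : ℝ) ^ 2 ≠ 0 := by positivity
  have hSpos : 0 < ∑ i, y i ^ 2 := lt_of_le_of_lt (by positivity) hS
  have hex : ∃ i, 0 < y i := by
    by_contra h
    push_neg at h
    have hz : ∀ i, y i = 0 := fun i => le_antisymm (h i) (hy i)
    simp [hz] at hSpos
  obtain ⟨i0, hi0⟩ := hex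
  have hApos : 0 < A := by
    rw [hA]
    refine Finset.sum_pos' (fun i _ => by positivity) ⟨i0, Finset.mem_univ _, ?_⟩
    exact mul_pos (pow_pos hi0 2) (pow_pos (one_div_pos.2 (Real.cosh_pos _)) 2)
  have hsum_eq : ∑ i, y i * Real.tanh (y i * μ0 / σ ^ 2) = (n : ℝ) * μ0 := by linarith
  have hkey : A / σ ^ 2 * μ0 < (n : ℝ) * μ0 := by
    rw [← hsum_eq, hA, Finset.sum_div, Finset.sum_mul]
    refine Finset.sum_lt_sum (fun i _ => ?_) ⟨i0, Finset.mem_univ _, ?_⟩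
    · rcases (hy i).lt_or_eq with h | h
      · have hk := key_ineq (t := y i * μ0 / σ ^ 2) (by positivity)
        have h2 := mul_lt_mul_of_pos_left hk h
        calc y i ^ 2 * (1 / Real.cosh (y i * μ0 / σ ^ 2)) ^ 2 / σ ^ 2 * μ0
            = y i * (y i * μ0 / σ ^ 2 * (1 / Real.cosh (y i * μ0 / σ ^ 2)) ^ 2) := by ring
          _ ≤ y i * Real.tanh (y i * μ0 / σ ^ 2) := le_of_lt h2
      · simp [← h]
    · have hk := key_ineq (t := y i0 * μ0 / σ ^ 2) (by positivity)
      have h2 := mul_lt_mul_of_pos_left hk hi0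
      calc y i0 ^ 2 * (1 / Real.cosh (y i0 * μ0 / σ ^ 2)) ^ 2 / σ ^ 2 * μ0
          = y i0 * (y i0 * μ0 / σ ^ 2 * (1 / Real.cosh (y i0 * μ0 / σ ^ 2)) ^ 2) := by ring
        _ < y i0 * Real.tanh (y i0 * μ0 / σ ^ 2) := h2
  have hfrac : A / σ ^ 2 < (n : ℝ) := lt_of_mul_lt_mul_right hkey hμ0.le
  have hbpos : 0 < (n : ℝ) - A / σ ^ 2 := by linarith
  have hcpos : 0 < 2 * μ0 / σ * (A / σ ^ 2) :=
    mul_pos (div_pos (by linarith) hσ) (div_pos hApos (by positivity))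
  set c : ℝ := 2 * μ0 / σ * (A / σ ^ 2) with hcdef
  set b : ℝ := A / σ ^ 2 - (n : ℝ) with hbdef
  have hbneg : b < 0 := by rw [hbdef]; linarith
  have hbne : b ≠ 0 := hbneg.ne
  -- continuous linear maps
  set q1 : ℝ × ℝ →L[ℝ] ℝ := ContinuousLinearMap.fst ℝ ℝ ℝ with hq1
  set q2 : ℝ × ℝ →L[ℝ] ℝ := ContinuousLinearMap.snd ℝ ℝ ℝ with hq2
  set L : ℝ × ℝ →L[ℝ] ℝ := (-c) • q1 + b • q2 with hL
  have hfst : HasStrictFDerivAt (fun p : ℝ × ℝ => p.1) q1 (σ, μ0) := hasStrictFDerivAt_fst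
  have hsnd : HasStrictFDerivAt (fun p : ℝ × ℝ => p.2) q2 (σ, μ0) := hasStrictFDerivAt_snd
  -- per-term derivatives
  have hterm : ∀ i : Fin n, HasStrictFDerivAt
      (fun p : ℝ × ℝ => y i * Real.tanh (y i * p.2 / p.1 ^ 2))
      ((y i ^ 2 * (1 / Real.cosh (y i * μ0 / σ ^ 2)) ^ 2 * (-(2 * μ0 / σ ^ 3))) • q1
        + (y i ^ 2 * (1 / Real.cosh (y i * μ0 / σ ^ 2)) ^ 2 * (σ ^ 2)⁻¹) • q2) (σ, μ0) := by
    intro i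
    have hsq : HasStrictFDerivAt (fun p : ℝ × ℝ => p.1 ^ 2) (σ • q1 + σ • q1) (σ, μ0) := by
      have h := hfst.mul hfst
      simp only [pow_two]
      exact h
    have hinv : HasStrictFDerivAt (fun p : ℝ × ℝ => (p.1 ^ 2)⁻¹)
        ((-((σ ^ 2) ^ 2)⁻¹) • (σ • q1 + σ • q1)) (σ, μ0) :=
      (hasStrictDerivAt_inv hσ2).comp_hasStrictFDerivAt (σ, μ0) hsq
    have hnum : HasStrictFDerivAt (fun p : ℝ × ℝ => y i * p.2) ((y i) • q2) (σ, μ0) :=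
      hsnd.const_mul (y i)
    have h1 : HasStrictFDerivAt (fun p : ℝ × ℝ => y i * p.2 / p.1 ^ 2)
        ((y i * μ0) • ((-((σ ^ 2) ^ 2)⁻¹) • (σ • q1 + σ • q1)) + (σ ^ 2)⁻¹ • ((y i) • q2))
        (σ, μ0) := by
      have h := hnum.mul hinv
      simp only [div_eq_mul_inv]
      exact h
    have h2 := (tanh_hasStrictDerivAt (y i * μ0 / σ ^ 2)).comp_hasStrictFDerivAt (σ, μ0) h1
    have h3 := h2.const_mul (y i)
    refine h3.congr_fderiv ?_
    refine ContinuousLinearMap.ext fun p => ?_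
    simp only [hq1, hq2, ContinuousLinearMap.add_apply, ContinuousLinearMap.smul_apply,
      ContinuousLinearMap.coe_fst', ContinuousLinearMap.coe_snd', smul_eq_mul]
    field_simp
    ring
  have hFsum := HasStrictFDerivAt.sum (u := Finset.univ) (fun i _ => hterm i)
  have hlin : HasStrictFDerivAt (fun p : ℝ × ℝ => (n : ℝ) * p.2) ((n : ℝ) • q2) (σ, μ0) :=
    hsnd.const_mul (n : ℝ)
  have hF0 := hFsum.sub hlin
  have hF : HasStrictFDerivAt
      (fun p : ℝ × ℝ => (∑ i, y i * Real.tanh (y i * p.2 / p.1 ^ 2)) - (n : ℝ) * p.2)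
      L (σ, μ0) := by
    rw [show (fun p : ℝ × ℝ => (∑ i, y i * Real.tanh (y i * p.2 / p.1 ^ 2)) - (n : ℝ) * p.2)
        = (∑ i, fun p : ℝ × ℝ => y i * Real.tanh (y i * p.2 / p.1 ^ 2)) - fun p => (n : ℝ) * p.2 by
      funext p; simp only [Pi.sub_apply, Finset.sum_apply]]
    refine hF0.congr_fderiv ?_
    refine ContinuousLinearMap.ext fun p => ?_
    simp only [hL, hq1, hq2, ContinuousLinearMap.add_apply, ContinuousLinearMap.sub_apply,
      ContinuousLinearMap.smul_apply, ContinuousLinearMap.sum_apply,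
      ContinuousLinearMap.coe_fst', ContinuousLinearMap.coe_snd', smul_eq_mul]
    have hsplit : ∑ i, (y i ^ 2 * (1 / Real.cosh (y i * μ0 / σ ^ 2)) ^ 2 * (-(2 * μ0 / σ ^ 3)) * p.1
        + y i ^ 2 * (1 / Real.cosh (y i * μ0 / σ ^ 2)) ^ 2 * (σ ^ 2)⁻¹ * p.2)
        = A * (-(2 * μ0 / σ ^ 3)) * p.1 + A * (σ ^ 2)⁻¹ * p.2 := by
      rw [Finset.sum_add_distrib, ← Finset.sum_mul, ← Finset.sum_mul, ← Finset.sum_mul,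
        ← Finset.sum_mul, ← hA]
    rw [hsplit, hcdef, hbdef]
    field_simp
    ring
  -- local inverse setup
  set Φ : ℝ × ℝ → ℝ × ℝ :=
    fun p : ℝ × ℝ => (p.1, (∑ i, y i * Real.tanh (y i * p.2 / p.1 ^ 2)) - (n : ℝ) * p.2)
    with hΦdef
  set f₁ : ℝ × ℝ →L[ℝ] ℝ × ℝ := q1.prod L with hf₁
  set f₂ : ℝ × ℝ →L[ℝ] ℝ × ℝ := q1.prod (b⁻¹ • (q2 + c • q1)) with hf₂
  have hleft : Function.LeftInverse f₂ f₁ := by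
    intro p
    apply Prod.ext
    · simp [hf₁, hf₂, hq1, hq2, hL]
    · simp only [hf₁, hf₂, hq1, hq2, hL, ContinuousLinearMap.prod_apply,
        ContinuousLinearMap.add_apply, ContinuousLinearMap.smul_apply,
        ContinuousLinearMap.coe_fst', ContinuousLinearMap.coe_snd', smul_eq_mul]
      field_simp
      ring
  have hright : Function.RightInverse f₂ f₁ := by
    intro p
    apply Prod.ext
    · simp [hf₁, hf₂, hq1, hq2, hL]
    · simp only [hf₁, hf₂, hq1, hq2, hL, ContinuousLinearMap.prod_apply,
        ContinuousLinearMap.add_apply, ContinuousLinearMap.smul_apply,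
        ContinuousLinearMap.coe_fst', ContinuousLinearMap.coe_snd', smul_eq_mul]
      field_simp
      ring
  set e : (ℝ × ℝ) ≃L[ℝ] ℝ × ℝ := ContinuousLinearEquiv.equivOfInverse f₁ f₂ hleft hright
    with hedef
  have hcoe : (e : (ℝ × ℝ) →L[ℝ] ℝ × ℝ) = f₁ := by
    refine ContinuousLinearMap.ext fun p => ?_
    rw [ContinuousLinearEquiv.coe_coe, hedef, ContinuousLinearEquiv.equivOfInverse_apply]
  have hΦ : HasStrictFDerivAt Φ (e : (ℝ × ℝ) →L[ℝ] ℝ × ℝ) (σ, μ0) := by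
    rw [hcoe, hf₁]
    exact hfst.prodMk hF
  have hΦpt : Φ (σ, μ0) = (σ, 0) := by
    rw [hΦdef]
    exact Prod.ext rfl hzero
  set Ψ : ℝ × ℝ → ℝ × ℝ := hΦ.localInverse Φ e (σ, μ0) with hΨdef
  have hloc : HasStrictFDerivAt Ψ ((e.symm : (ℝ × ℝ) →L[ℝ] ℝ × ℝ)) (σ, 0) := by
    have h := hΦ.to_localInverse
    rwa [hΦpt] at h
  -- derivative of s ↦ (Ψ (s,0)).2
  have hι : HasStrictFDerivAt (fun s : ℝ => ((s, (0 : ℝ)) : ℝ × ℝ))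
      ((ContinuousLinearMap.id ℝ ℝ).prod 0) σ :=
    (hasStrictFDerivAt_id σ).prodMk (hasStrictFDerivAt_const (0 : ℝ) σ)
  have hcomp1 := hloc.comp σ hι
  have hcomp2 := hasStrictFDerivAt_snd.comp σ hcomp1
  have hψ : HasDerivAt (fun s : ℝ => (Ψ (s, 0)).2)
      (((ContinuousLinearMap.snd ℝ ℝ ℝ).comp
        ((e.symm : (ℝ × ℝ) →L[ℝ] ℝ × ℝ).comp ((ContinuousLinearMap.id ℝ ℝ).prod 0))) 1) σ :=
    hcomp2.hasFDerivAt.hasDerivAt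
  have hval : (((ContinuousLinearMap.snd ℝ ℝ ℝ).comp
      ((e.symm : (ℝ × ℝ) →L[ℝ] ℝ × ℝ).comp ((ContinuousLinearMap.id ℝ ℝ).prod 0))) 1)
      = -c / ((n : ℝ) - A / σ ^ 2) := by
    have hsymm : (e.symm : (ℝ × ℝ) →L[ℝ] ℝ × ℝ) = f₂ := by
      refine ContinuousLinearMap.ext fun p => ?_
      rw [ContinuousLinearEquiv.coe_coe, hedef, ContinuousLinearEquiv.symm_equivOfInverse,
        ContinuousLinearEquiv.equivOfInverse_apply]
    rw [ContinuousLinearMap.comp_apply, ContinuousLinearMap.comp_apply, hsymm]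
    simp only [hf₂, hq1, hq2, ContinuousLinearMap.id_apply, ContinuousLinearMap.zero_apply, ContinuousLinearMap.prod_apply,
      ContinuousLinearMap.add_apply, ContinuousLinearMap.smul_apply,
      ContinuousLinearMap.coe_fst', ContinuousLinearMap.coe_snd', smul_eq_mul]
    rw [hbdef, show A / σ ^ 2 - (n : ℝ) = -((n : ℝ) - A / σ ^ 2) by ring, inv_neg,
      div_eq_mul_inv]
    ring
  rw [hval] at hψ
  -- eventual equality with μhat
  have hΨσ : Ψ (σ, 0) = (σ, μ0) := by
    have h := hΦ.localInverse_apply_image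
    rwa [hΦpt] at h
  have hι_t : Filter.Tendsto (fun s : ℝ => ((s, (0 : ℝ)) : ℝ × ℝ)) (𝓝 σ) (𝓝 ((σ : ℝ), (0 : ℝ))) :=
    (Continuous.prodMk continuous_id continuous_const).tendsto σ
  have hev1 : ∀ᶠ s in 𝓝 σ, Φ (Ψ (s, 0)) = (s, 0) := by
    have h := hΦ.eventually_right_inverse
    rw [hΦpt] at h
    exact hι_t.eventually h
  have hev2 : ∀ᶠ s in 𝓝 σ, 0 < (Ψ (s, 0)).2 := by
    have hT : Filter.Tendsto (fun s : ℝ => (Ψ (s, 0)).2) (𝓝 σ) (𝓝 μ0) := by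
      have h1 : Filter.Tendsto (fun s : ℝ => Ψ (s, 0)) (𝓝 σ) (𝓝 (Ψ (σ, 0))) :=
        (hloc.continuousAt).tendsto.comp hι_t
      rw [hΨσ] at h1
      exact (continuous_snd.tendsto _).comp h1
    exact hT.eventually (eventually_gt_nhds hμ0)
  have hev3 : ∀ᶠ s in 𝓝 σ, 0 < s := eventually_gt_nhds hσ
  have hev4 : ∀ᶠ s in 𝓝 σ, (n : ℝ) * s ^ 2 < ∑ i, y i ^ 2 := by
    have hco : ContinuousAt (fun s : ℝ => (n : ℝ) * s ^ 2) σ := by fun_prop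
    exact hco.eventually_lt continuousAt_const hS
  have heq : μhat =ᶠ[𝓝 σ] fun s : ℝ => (Ψ (s, 0)).2 := by
    filter_upwards [hev1, hev2, hev3, hev4] with s h1 h2 h3 h4
    rw [hΦdef] at h1
    simp only [Prod.mk.injEq] at h1
    obtain ⟨h1a, h1b⟩ := h1
    rw [h1a] at h1b
    exact ((hμhat s h3 h4).2.2 _ h2 h1b).symm
  exact ⟨hbpos, hψ.congr_of_eventuallyEq heq,
    div_neg_of_neg_of_pos (neg_lt_zero.mpr hcpos) hbpos⟩
end

section
/- Let σ, σ₀ > 0 and μ, μ₀ ∈ ℝ. If μ² + σ² = μ₀² + σ₀² and log σ + μ²/(2σ²) = log σ₀ + μ₀²/(2σ₀²), then σ = σ₀ and μ² = μ₀². (Equivalently: the map a ↦ log a + A₀/a is strictly decreasing on (0, A₀], where A₀ = μ₀² + σ₀², so the system has only the trivial solution.) -/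
lemma foldedNormal_aux (A a b : ℝ) (ha : 0 < a) (hab : a < b) (hbA : b ^ 2 ≤ A) :
    Real.log b + A / (2 * b ^ 2) < Real.log a + A / (2 * a ^ 2) := by
  have hb : 0 < b := ha.trans hab
  have hlog : Real.log b - Real.log a ≤ (b - a) / a := by
    have h := Real.log_le_sub_one_of_pos (div_pos hb ha)
    rw [Real.log_div hb.ne' ha.ne'] at h
    have : b / a - 1 = (b - a) / a := by field_simp
    linarith
  have hpoly : (b - a) / a < A / (2 * a ^ 2) - A / (2 * b ^ 2) := by
    rw [div_lt_iff₀ ha]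
    have e : (A / (2 * a ^ 2) - A / (2 * b ^ 2)) * a = A * (b - a) * (b + a) / (2 * a * b ^ 2) := by
      field_simp; ring
    rw [e, lt_div_iff₀ (by positivity)]
    have h3 : 2 * a * b ^ 2 < A * (b + a) := by nlinarith [mul_le_mul_of_nonneg_right hbA (by linarith : (0:ℝ) ≤ b + a), mul_pos (mul_pos hb hb) (sub_pos.2 hab)]
    nlinarith [mul_lt_mul_of_pos_left h3 (sub_pos.2 hab)]
  linarith

/-- Algebraic identifiability for the folded normal: if `μ² + σ² = μ₀² + σ₀²` and
`log σ + μ²/(2σ²) = log σ₀ + μ₀²/(2σ₀²)` with `σ, σ₀ > 0`, then `σ = σ₀` and `μ² = μ₀²`. -/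
theorem foldedNormal_identifiability (μ μ₀ σ σ₀ : ℝ) (hσ : 0 < σ) (hσ₀ : 0 < σ₀)
    (h1 : μ ^ 2 + σ ^ 2 = μ₀ ^ 2 + σ₀ ^ 2)
    (h2 : Real.log σ + μ ^ 2 / (2 * σ ^ 2) = Real.log σ₀ + μ₀ ^ 2 / (2 * σ₀ ^ 2)) :
    σ = σ₀ ∧ μ ^ 2 = μ₀ ^ 2 := by
  set A : ℝ := μ₀ ^ 2 + σ₀ ^ 2 with hA
  have hμ2 : μ ^ 2 = A - σ ^ 2 := by linarith
  have hμ₀2 : μ₀ ^ 2 = A - σ₀ ^ 2 := by linarith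
  have hσA : σ ^ 2 ≤ A := by nlinarith [sq_nonneg μ]
  have hσ₀A : σ₀ ^ 2 ≤ A := by nlinarith [sq_nonneg μ₀]
  have e1 : μ ^ 2 / (2 * σ ^ 2) = A / (2 * σ ^ 2) - 1 / 2 := by
    rw [hμ2]; field_simp
  have e2 : μ₀ ^ 2 / (2 * σ₀ ^ 2) = A / (2 * σ₀ ^ 2) - 1 / 2 := by
    rw [hμ₀2]; field_simp
  have h2' : Real.log σ + A / (2 * σ ^ 2) = Real.log σ₀ + A / (2 * σ₀ ^ 2) := by
    rw [e1, e2] at h2; linarith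
  have hσeq : σ = σ₀ := by
    rcases lt_trichotomy σ σ₀ with h | h | h
    · exact absurd h2' (foldedNormal_aux A σ σ₀ hσ h hσ₀A).ne'
    · exact h
    · exact absurd h2' (foldedNormal_aux A σ₀ σ hσ₀ h hσA).ne
  exact ⟨hσeq, by nlinarith⟩
end

section
/- Let μ₀ ≠ 0 and σ₀ > 0, and let c₀, c₂, c_T be real numbers. If there exists δ > 0 such that c₀ + c₂·y² + c_T·y·tanh(y·μ₀/σ₀²) = 0 for all y ∈ [0,δ), then c₀ = c₂ = c_T = 0. -/
open Real Filter Set Topology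

-- tanh x < x for x > 0
lemma tanh_lt_self {x : ℝ} (hx : 0 < x) : Real.tanh x < x := by
  have key : Real.sinh x < x * Real.cosh x := by
    have hmono : StrictMonoOn (fun t : ℝ => t * Real.cosh t - Real.sinh t) (Ici 0) := by
      apply strictMonoOn_of_deriv_pos (convex_Ici _)
      · exact ((continuous_id.mul Real.continuous_cosh).sub Real.continuous_sinh).continuousOn
      · intro t ht
        rw [interior_Ici, mem_Ioi] at ht
        have h1 : HasDerivAt (fun t : ℝ => t * Real.cosh t - Real.sinh t)
            (1 * Real.cosh t + t * Real.sinh t - Real.cosh t) t :=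
          ((hasDerivAt_id t).mul (Real.hasDerivAt_cosh t)).sub (Real.hasDerivAt_sinh t)
        rw [h1.deriv]
        have := Real.sinh_pos_iff.mpr ht
        nlinarith [Real.sinh_pos_iff.mpr ht]
    have := hmono (self_mem_Ici) (le_of_lt hx : (0:ℝ) ≤ x) hx
    simpa using this
  rw [Real.tanh_eq_sinh_div_cosh, div_lt_iff₀ (Real.cosh_pos x)]
  exact key

lemma abs_tanh_lt {x : ℝ} (hx : x ≠ 0) : Real.tanh x ≠ x := by
  rcases hx.lt_or_gt with h | h
  · have := tanh_lt_self (neg_pos.mpr h)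
    rw [Real.tanh_neg] at this
    intro he; rw [he] at this; linarith
  · exact (tanh_lt_self h).ne

-- derivative of tanh at 0 is 1
lemma hasDerivAt_tanh_zero : HasDerivAt Real.tanh 1 0 := by
  have heq : Real.tanh = fun x => Real.sinh x / Real.cosh x :=
    funext fun x => Real.tanh_eq_sinh_div_cosh x
  rw [heq]
  have := (Real.hasDerivAt_sinh 0).div (Real.hasDerivAt_cosh 0) (by positivity)
  refine this.congr_deriv ?_
  simp

/-- Linear independence of `1`, `y²`, `y·tanh(y μ₀/σ₀²)` near `0` (for `μ₀ ≠ 0`, `σ₀ > 0`):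
if `c₀ + c₂ y² + c_T y tanh(y μ₀/σ₀²) = 0` for all `y ∈ [0, δ)` with `δ > 0`,
then `c₀ = c₂ = c_T = 0`. -/
theorem foldedNormal_info_linear_independence (μ₀ σ₀ c₀ c₂ cT δ : ℝ)
    (hμ₀ : μ₀ ≠ 0) (hσ₀ : 0 < σ₀) (hδ : 0 < δ)
    (h : ∀ y : ℝ, 0 ≤ y → y < δ →
      c₀ + c₂ * y ^ 2 + cT * y * Real.tanh (y * μ₀ / σ₀ ^ 2) = 0) :
    c₀ = 0 ∧ c₂ = 0 ∧ cT = 0 := by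
  set a := μ₀ / σ₀ ^ 2 with ha
  have ha0 : a ≠ 0 := div_ne_zero hμ₀ (by positivity)
  have harg : ∀ y : ℝ, y * μ₀ / σ₀ ^ 2 = a * y := fun y => by rw [ha]; ring
  have hc₀ : c₀ = 0 := by have := h 0 le_rfl hδ; simpa using this
  -- for y ∈ (0, δ): c₂ + cT * (tanh (a y) / y) = 0
  have key : ∀ y : ℝ, 0 < y → y < δ → c₂ + cT * (Real.tanh (a * y) / y) = 0 := by
    intro y hy hyδ
    have := h y hy.le hyδ
    rw [hc₀, harg] at this
    field_simp
    nlinarith [this]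
  -- slope limit
  have hg : HasDerivAt (fun y : ℝ => Real.tanh (a * y)) a 0 := by
    have h1 : HasDerivAt (fun y : ℝ => a * y) a 0 := by
      simpa using (hasDerivAt_id (0:ℝ)).const_mul a
    have h2 : HasDerivAt (Real.tanh ∘ fun y : ℝ => a * y) (1 * a) 0 :=
      HasDerivAt.comp 0 (by simpa using hasDerivAt_tanh_zero) h1
    simpa [Function.comp_def] using h2
  have hslope : Tendsto (fun y : ℝ => Real.tanh (a * y) / y) (𝓝[>] 0) (𝓝 a) := by
    have := hasDerivAt_iff_tendsto_slope.mp hg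
    have h2 : Tendsto (slope (fun y : ℝ => Real.tanh (a * y)) 0) (𝓝[>] 0) (𝓝 a) :=
      this.mono_left (nhdsWithin_mono _ (fun x hx => ne_of_gt hx))
    refine h2.congr' ?_
    filter_upwards [self_mem_nhdsWithin] with y hy
    simp [slope_def_field]
  -- limit of constant
  have hlim : c₂ + cT * a = 0 := by
    have htend : Tendsto (fun y : ℝ => c₂ + cT * (Real.tanh (a * y) / y)) (𝓝[>] 0)
        (𝓝 (c₂ + cT * a)) := (tendsto_const_nhds.add (tendsto_const_nhds.mul hslope))
    have hzero : Tendsto (fun y : ℝ => c₂ + cT * (Real.tanh (a * y) / y)) (𝓝[>] 0) (𝓝 0) := by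
      refine Tendsto.congr' ?_ tendsto_const_nhds
      filter_upwards [Ioo_mem_nhdsGT hδ] with y hy
      exact (key y hy.1 hy.2).symm
    exact tendsto_nhds_unique htend hzero
  -- cT = 0
  have hcT : cT = 0 := by
    by_contra hcT
    have heq : Real.tanh (a * (δ/2)) = a * (δ/2) := by
      have hk := key (δ/2) (by linarith) (by linarith)
      have hy : (δ/2 : ℝ) ≠ 0 := by positivity
      have : cT * (Real.tanh (a * (δ/2)) / (δ/2) - a) = 0 := by linarith [hlim, hk]
      have h3 : Real.tanh (a * (δ/2)) / (δ/2) = a := by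
        have := (mul_eq_zero.mp this).resolve_left hcT
        linarith
      rw [div_eq_iff hy] at h3
      exact h3
    exact abs_tanh_lt (mul_ne_zero ha0 (by positivity)) heq
  refine ⟨hc₀, ?_, hcT⟩
  rw [hcT] at hlim; linarith
end
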